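/- arXiv:1510.01653 — 3 statements merged into one kernel-verified Lean document; each statement's English description precedes it below -/
import Mathlib

section
/- Let Φ = (φ_1, …, φ_M) be a frame for ℝ^N (its vectors span ℝ^N), and suppose c' ∈ ℝ^M with c'_i ≥ 0 attains the infimum of ‖I_N − S(c)‖₂ over all c ∈ ℝ^M with c_i ≥ 0. Then cond(S(c')) ≤ cond(ΦΦᵀ), where ΦΦᵀ = Σ_{i=1}^M φ_i φ_iᵀ is the frame operator of Φ. -/
/-! Let `a ≤ b` be the extreme eigenvalues of the frame operator `S = ΦΦᵀ`; `a > 0` because `Φ`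
spans. The constant weights `2 / (a + b)` give `‖I - (2 / (a + b)) S‖₂ ≤ (b - a) / (a + b)`, so by
optimality also `ε = ‖I - S(c')‖₂ ≤ (b - a) / (a + b)`. Then the spectrum of `S(c')` lies in
`[1 - ε, 1 + ε]`, and `cond S(c') ≤ (1 + ε) / (1 - ε) ≤ b / a`. -/

/-- The ℓ²→ℓ² operator norm (largest singular value) of a square real matrix. -/
noncomputable def opNorm {N : ℕ} (A : Matrix (Fin N) (Fin N) ℝ) : ℝ :=
  ‖(Matrix.toEuclideanCLM (𝕜 := ℝ) A : EuclideanSpace ℝ (Fin N) →L[ℝ] EuclideanSpace ℝ (Fin N))‖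

/-- `frameOp φ c = ∑ i, c i • φ i φ iᵀ`. -/
noncomputable def frameOp {N M : ℕ} (φ : Fin M → (Fin N → ℝ)) (c : Fin M → ℝ) :
    Matrix (Fin N) (Fin N) ℝ :=
  ∑ i, c i • Matrix.vecMulVec (φ i) (φ i)

/-- The largest eigenvalue of a Hermitian real matrix. -/
noncomputable def lamMax {N : ℕ} {A : Matrix (Fin N) (Fin N) ℝ} (hA : A.IsHermitian) : ℝ :=
  ⨆ i, hA.eigenvalues i

/-- The smallest eigenvalue of a Hermitian real matrix. -/
noncomputable def lamMin {N : ℕ} {A : Matrix (Fin N) (Fin N) ℝ} (hA : A.IsHermitian) : ℝ :=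
  ⨅ i, hA.eigenvalues i

open Matrix

open scoped Pointwise in
theorem spectrum.one_sub_smul_eq_image {𝕜 A : Type*} [Field 𝕜] [Ring A] [Algebra 𝕜 A]
    (a : A) {t : 𝕜} (ht : t ≠ 0) :
    spectrum 𝕜 (1 - t • a) = (fun μ => 1 - t * μ) '' spectrum 𝕜 a := by
  have h := spectrum.singleton_sub_eq (R := 𝕜) (Units.mk0 t ht • a) 1
  rw [map_one, spectrum.unit_smul_eq_smul, Units.smul_mk0, Units.smul_mk0] at h
  rw [← h, Set.singleton_sub, ← Set.image_smul, Set.image_image]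
  rfl

theorem Matrix.IsHermitian.opNorm_le_iff {N : ℕ} {A : Matrix (Fin N) (Fin N) ℝ}
    (hA : A.IsHermitian) {r : ℝ} (hr : 0 ≤ r) :
    opNorm A ≤ r ↔ ∀ k ∈ spectrum ℝ A, |k| ≤ r := by
  have hT : IsSelfAdjoint (toEuclideanCLM (𝕜 := ℝ) A) := hA.isSelfAdjoint.map _
  rw [opNorm, ← ENNReal.ofReal_le_ofReal_iff hr, ofReal_norm, enorm_eq_nnnorm,
    ← ContinuousLinearMap.spectralRadius_eq_nnnorm _ hT, spectralRadius,
    AlgEquiv.spectrum_eq, iSup₂_le_iff]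
  refine forall₂_congr fun k _ => ?_
  rw [← enorm_eq_nnnorm, ← ofReal_norm, ENNReal.ofReal_le_ofReal_iff hr, Real.norm_eq_abs]

theorem frameOp_const {N M : ℕ} (φ : Fin M → Fin N → ℝ) (t : ℝ) :
    frameOp φ (fun _ => t) = t • frameOp φ (fun _ => 1) := by
  simp [frameOp, Finset.smul_sum]

theorem frameOp_one_eq_conjTranspose_mul {N M : ℕ} (φ : Fin M → Fin N → ℝ) :
    frameOp φ (fun _ => 1) = (of φ)ᴴ * of φ := by
  ext j k
  simp [frameOp, mul_apply, vecMulVec_apply, Matrix.sum_apply]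

theorem eq_zero_of_forall_dotProduct_eq_zero {N M : ℕ} {φ : Fin M → Fin N → ℝ}
    (hspan : Submodule.span ℝ (Set.range φ) = ⊤) {x : Fin N → ℝ} (hx : ∀ i, φ i ⬝ᵥ x = 0) :
    x = 0 := by
  have hker : Set.range φ ⊆ LinearMap.ker ((dotProductBilin ℝ ℝ).flip x) := by
    rintro _ ⟨i, rfl⟩
    simpa using hx i
  have hxx := Submodule.span_le.mpr hker (hspan ▸ Submodule.mem_top : x ∈ Submodule.span ℝ _)
  exact dotProduct_self_eq_zero.mp (by simpa using hxx)

theorem posDef_frameOp_one {N M : ℕ} {φ : Fin M → Fin N → ℝ}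
    (hspan : Submodule.span ℝ (Set.range φ) = ⊤) : (frameOp φ (fun _ => 1)).PosDef := by
  rw [frameOp_one_eq_conjTranspose_mul]
  refine PosDef.conjTranspose_mul_self _ fun x y hxy =>
    sub_eq_zero.mp <| eq_zero_of_forall_dotProduct_eq_zero hspan fun i => ?_
  rw [dotProduct_sub]
  exact sub_eq_zero.mpr (congrFun hxy i)

section Eigenvalues

variable {N : ℕ} {A : Matrix (Fin N) (Fin N) ℝ} (hA : A.IsHermitian)

theorem lamMin_le_of_mem_spectrum {k : ℝ} (hk : k ∈ spectrum ℝ A) : lamMin hA ≤ k := by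
  obtain ⟨i, rfl⟩ := hA.spectrum_real_eq_range_eigenvalues ▸ hk
  exact ciInf_le (Set.finite_range _).bddBelow i

theorem le_lamMax_of_mem_spectrum {k : ℝ} (hk : k ∈ spectrum ℝ A) : k ≤ lamMax hA := by
  obtain ⟨i, rfl⟩ := hA.spectrum_real_eq_range_eigenvalues ▸ hk
  exact le_ciSup (Set.finite_range _).bddAbove i

variable [Nonempty (Fin N)]

theorem lamMax_le {b : ℝ} (h : ∀ k ∈ spectrum ℝ A, k ≤ b) : lamMax hA ≤ b :=
  ciSup_le fun i => h _ (hA.eigenvalues_mem_spectrum_real i)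

theorem le_lamMin {a : ℝ} (h : ∀ k ∈ spectrum ℝ A, a ≤ k) : a ≤ lamMin hA :=
  le_ciInf fun i => h _ (hA.eigenvalues_mem_spectrum_real i)

theorem lamMin_le_lamMax : lamMin hA ≤ lamMax hA :=
  have hk := hA.eigenvalues_mem_spectrum_real (Classical.arbitrary _)
  (lamMin_le_of_mem_spectrum hA hk).trans (le_lamMax_of_mem_spectrum hA hk)

end Eigenvalues

theorem Matrix.PosDef.lamMin_pos {N : ℕ} [Nonempty (Fin N)] {A : Matrix (Fin N) (Fin N) ℝ}
    (hA : A.PosDef) : 0 < lamMin hA.isHermitian := by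
  obtain ⟨i, hi⟩ := exists_eq_ciInf_of_finite (f := hA.isHermitian.eigenvalues)
  rw [lamMin, ← hi]
  exact hA.eigenvalues_pos i

theorem abs_one_sub_le_opNorm_one_sub {N : ℕ} {A : Matrix (Fin N) (Fin N) ℝ}
    (hA : A.IsHermitian) {k : ℝ} (hk : k ∈ spectrum ℝ A) : |1 - k| ≤ opNorm (1 - A) := by
  have hmem : 1 - k ∈ spectrum ℝ (1 - A) := by
    rw [← one_smul ℝ A, spectrum.one_sub_smul_eq_image A one_ne_zero]
    exact ⟨k, hk, by ring⟩
  exact ((isHermitian_one.sub hA).opNorm_le_iff (norm_nonneg _)).mp le_rfl _ hmem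

theorem opNorm_one_sub_smul_le {N : ℕ} {A : Matrix (Fin N) (Fin N) ℝ} (hA : A.IsHermitian)
    {a b : ℝ} (hab : a ≤ b) (hpos : 0 < a + b) (h : ∀ k ∈ spectrum ℝ A, a ≤ k ∧ k ≤ b) :
    opNorm (1 - (2 / (a + b)) • A) ≤ (b - a) / (a + b) := by
  have ht : 2 / (a + b) ≠ 0 := by positivity
  refine ((isHermitian_one.sub (hA.smul (.all _))).opNorm_le_iff
    (div_nonneg (sub_nonneg.mpr hab) hpos.le)).mpr ?_
  rw [spectrum.one_sub_smul_eq_image A ht]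
  rintro _ ⟨μ, hμ, rfl⟩
  obtain ⟨haμ, hμb⟩ := h μ hμ
  dsimp only
  rw [abs_le, show 1 - 2 / (a + b) * μ = (a + b - 2 * μ) / (a + b) by field_simp,
    ← neg_div, div_le_div_iff_of_pos_right hpos, div_le_div_iff_of_pos_right hpos]
  constructor <;> linarith

/-- The condition-number inequality `cond(S(c')) ≤ cond(ΦΦᵀ)` is stated cross-multiplied, with
`ΦΦᵀ = frameOp φ 1`. -/
theorem stmt_7_general (N M : ℕ) (hN : 0 < N) (φ : Fin M → (Fin N → ℝ))
    (hspan : Submodule.span ℝ (Set.range φ) = ⊤)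
    (hH : ∀ c : Fin M → ℝ, (frameOp φ c).IsHermitian)
    (c' : Fin M → ℝ)
    (hopt : ∀ d : Fin M → ℝ, (∀ i, 0 ≤ d i) →
      opNorm (1 - frameOp φ c') ≤ opNorm (1 - frameOp φ d)) :
    lamMax (hH c') * lamMin (hH (fun _ => 1)) ≤ lamMin (hH c') * lamMax (hH (fun _ => 1)) := by
  have : Nonempty (Fin N) := Fin.pos_iff_nonempty.mp hN
  set S := hH fun _ => 1
  set a := lamMin S
  set b := lamMax S
  have ha : 0 < a := (posDef_frameOp_one hspan).lamMin_pos
  have hab : a ≤ b := lamMin_le_lamMax S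
  have hsum : 0 < a + b := by linarith
  set ε := opNorm (1 - frameOp φ c')
  have hε : ε * (a + b) ≤ b - a := by
    have h := hopt (fun _ => 2 / (a + b)) fun _ => by positivity
    rw [frameOp_const] at h
    have h' := h.trans <| opNorm_one_sub_smul_le S hab hsum fun k hk =>
      ⟨lamMin_le_of_mem_spectrum S hk, le_lamMax_of_mem_spectrum S hk⟩
    rwa [le_div_iff₀ hsum] at h'
  have hmax : lamMax (hH c') ≤ 1 + ε := lamMax_le _ fun k hk => by
    linarith [(abs_le.mp (abs_one_sub_le_opNorm_one_sub (hH c') hk)).1]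
  have hmin : 1 - ε ≤ lamMin (hH c') := le_lamMin _ fun k hk => by
    linarith [(abs_le.mp (abs_one_sub_le_opNorm_one_sub (hH c') hk)).2]
  calc lamMax (hH c') * a ≤ (1 + ε) * a := by gcongr
    _ ≤ (1 - ε) * b := by linarith
    _ ≤ lamMin (hH c') * b := by gcongr; linarith

/-- if `Φ` spans `ℝ^N` and `c' ≥ 0` attains the infimum of `‖I - S(c)‖₂`
over `c ≥ 0`, then `cond(S(c')) ≤ cond(ΦΦᵀ)` where `ΦΦᵀ = S(1) = ∑ φ_i φ_iᵀ` is the frame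
operator; the condition-number inequality is expressed in the cross-multiplied form
`λ_max(S(c')) · λ_min(ΦΦᵀ) ≤ λ_min(S(c')) · λ_max(ΦΦᵀ)`. -/
theorem stmt_7 (N M : ℕ) (hN : 0 < N) (φ : Fin M → (Fin N → ℝ))
    (hspan : Submodule.span ℝ (Set.range φ) = ⊤)
    (hH : ∀ c : Fin M → ℝ, (frameOp φ c).IsHermitian)
    (c' : Fin M → ℝ) (hc' : ∀ i, 0 ≤ c' i)
    (hopt : ∀ d : Fin M → ℝ, (∀ i, 0 ≤ d i) →
      opNorm (1 - frameOp φ c') ≤ opNorm (1 - frameOp φ d)) :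
    lamMax (hH c') * lamMin (hH (fun _ => 1)) ≤ lamMin (hH c') * lamMax (hH (fun _ => 1)) :=
  stmt_7_general N M hN φ hspan hH c' hopt
end

section
/- The function f, defined on the set of N×M real matrices whose columns all have Euclidean norm 1 by f(Φ) = inf{‖I_N − Σ_{i=1}^M c_i φ_i φ_iᵀ‖₂ : c ∈ ℝ^M, c_i ≥ 0 for all i} (where φ_1, …, φ_M are the columns of Φ), is continuous with respect to Φ. -/
/-! Writing `S c = frameOp φ c`, testing `φ iᵀ (1 - S c) φ i = 1 - ∑ j, c j (φ j ⬝ φ i)²`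
against the operator norm gives `‖1 - S c‖ ≥ c i - 1` for unit columns, so any `c` with a
coefficient above `2` does worse than `c = 0`, for which the norm is at most `1`. Hence on unit
columns the infimum may be taken over the compact box `[0, 2]^M`, and the infimum over a compact
set of a jointly continuous function is continuous in the parameter. -/

open Matrix

section OpNorm
variable {N : ℕ}

lemma continuous_opNorm : Continuous (opNorm : Matrix (Fin N) (Fin N) ℝ → ℝ) :=
  continuous_norm.comp <| LinearMap.continuous_of_finiteDimensional
    (toEuclideanCLM (n := Fin N) (𝕜 := ℝ)).toAlgEquiv.toLinearMap

lemma opNorm_one_le : opNorm (1 : Matrix (Fin N) (Fin N) ℝ) ≤ 1 := by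
  rw [opNorm, map_one]
  exact ContinuousLinearMap.norm_id_le

lemma abs_dotProduct_mulVec_le_opNorm (A : Matrix (Fin N) (Fin N) ℝ) (x : Fin N → ℝ) :
    |x ⬝ᵥ A *ᵥ x| ≤ opNorm A * (x ⬝ᵥ x) := by
  set v : EuclideanSpace ℝ (Fin N) := WithLp.toLp 2 x
  have hv : ‖v‖ ^ 2 = x ⬝ᵥ x := by
    rw [← real_inner_self_eq_norm_sq]
    simpa using inner_toEuclideanCLM 1 v v
  rw [← inner_toEuclideanCLM A v v]
  calc |inner ℝ v (toEuclideanCLM (𝕜 := ℝ) A v)| ≤ ‖v‖ * ‖toEuclideanCLM (𝕜 := ℝ) A v‖ :=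
        abs_real_inner_le_norm _ _
    _ ≤ ‖v‖ * (opNorm A * ‖v‖) := by gcongr; exact ContinuousLinearMap.le_opNorm _ _
    _ = opNorm A * (x ⬝ᵥ x) := by rw [← hv]; ring

end OpNorm

section FrameOp
variable {N M : ℕ}

lemma continuous_frameOp :
    Continuous fun p : (Fin M → Fin N → ℝ) × (Fin M → ℝ) => frameOp p.1 p.2 :=
  continuous_finsetSum _ fun i _ =>
    ((continuous_apply i).comp continuous_snd).smul
      (Continuous.matrix_vecMulVec ((continuous_apply i).comp continuous_fst)
        ((continuous_apply i).comp continuous_fst))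

lemma frameOp_zero (φ : Fin M → Fin N → ℝ) : frameOp φ 0 = 0 := by
  simp [frameOp]

lemma dotProduct_frameOp_mulVec (φ : Fin M → Fin N → ℝ) (c : Fin M → ℝ) (x : Fin N → ℝ) :
    x ⬝ᵥ frameOp φ c *ᵥ x = ∑ j, c j * (φ j ⬝ᵥ x) ^ 2 := by
  simp only [frameOp, sum_mulVec, dotProduct_sum, smul_mulVec, vecMulVec_mulVec, dotProduct_smul]
  refine Finset.sum_congr rfl fun j _ => ?_
  simp [dotProduct_comm x, sq]

lemma sub_one_le_opNorm_one_sub_frameOp (φ : Fin M → Fin N → ℝ) {c : Fin M → ℝ}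
    (hc : ∀ j, 0 ≤ c j) {i : Fin M} (hφ : φ i ⬝ᵥ φ i = 1) :
    c i - 1 ≤ opNorm (1 - frameOp φ c) := by
  have hq := abs_dotProduct_mulVec_le_opNorm (1 - frameOp φ c) (φ i)
  rw [sub_mulVec, one_mulVec, dotProduct_sub, dotProduct_frameOp_mulVec, hφ, mul_one] at hq
  have hci : c i ≤ ∑ j, c j * (φ j ⬝ᵥ φ i) ^ 2 :=
    calc c i = c i * (φ i ⬝ᵥ φ i) ^ 2 := by rw [hφ]; ring
      _ ≤ _ := Finset.single_le_sum (f := fun j => c j * (φ j ⬝ᵥ φ i) ^ 2)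
          (fun j _ => mul_nonneg (hc j) (sq_nonneg _)) (Finset.mem_univ i)
  linarith [neg_abs_le (1 - ∑ j, c j * (φ j ⬝ᵥ φ i) ^ 2)]

lemma sInf_opNorm_one_sub_frameOp_eq_Icc (φ : Fin M → Fin N → ℝ) (hφ : ∀ i, φ i ⬝ᵥ φ i = 1) :
    sInf {r : ℝ | ∃ c : Fin M → ℝ, (∀ i, 0 ≤ c i) ∧ r = opNorm (1 - frameOp φ c)} =
      sInf ((fun c => opNorm (1 - frameOp φ c)) '' Set.Icc 0 2) := by
  set g := fun c => opNorm (1 - frameOp φ c)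
  have hbdd : BddBelow (g '' Set.Icc 0 2) := ⟨0, by rintro _ ⟨c, -, rfl⟩; exact norm_nonneg _⟩
  refine le_antisymm ?_ ?_
  · refine csInf_le_csInf ⟨0, ?_⟩ ⟨g 0, 0, Set.left_mem_Icc.2 zero_le_two, rfl⟩ ?_
    · rintro _ ⟨c, -, rfl⟩; exact norm_nonneg _
    · rintro _ ⟨c, hc, rfl⟩; exact ⟨c, hc.1, rfl⟩
  · refine le_csInf ⟨g 0, 0, fun _ => le_rfl, rfl⟩ ?_
    rintro _ ⟨c, hc, rfl⟩
    by_cases hc2 : ∀ i, c i ≤ 2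
    · exact csInf_le hbdd ⟨c, ⟨hc, hc2⟩, rfl⟩
    obtain ⟨i, hi⟩ : ∃ i, 2 < c i := by simpa using hc2
    have h0 : g 0 ≤ 1 := by simpa [g, frameOp_zero] using opNorm_one_le
    calc sInf (g '' Set.Icc 0 2) ≤ g 0 := csInf_le hbdd ⟨0, Set.left_mem_Icc.2 zero_le_two, rfl⟩
      _ ≤ g c := by linarith [sub_one_le_opNorm_one_sub_frameOp φ hc (hφ i)]

end FrameOp

/-- on `N×M` matrices (identified with the `M`-tuple of their columns in
`ℝ^N`) whose columns all have Euclidean norm `1`, the function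
`f(Φ) = inf {‖I - ∑ c_i φ_i φ_iᵀ‖₂ : c ≥ 0}` is continuous. -/
theorem stmt_12 (N M : ℕ) :
    ContinuousOn
      (fun φ : Fin M → (Fin N → ℝ) =>
        sInf {r : ℝ | ∃ c : Fin M → ℝ, (∀ i, 0 ≤ c i) ∧ r = opNorm (1 - frameOp φ c)})
      {φ : Fin M → (Fin N → ℝ) | ∀ i, ∑ k, (φ i k) ^ 2 = 1} := by
  have hcont : Continuous fun p : (Fin M → Fin N → ℝ) × (Fin M → ℝ) =>
      opNorm (1 - frameOp p.1 p.2) :=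
    continuous_opNorm.comp (continuous_const.sub continuous_frameOp)
  refine ((isCompact_Icc (a := 0) (b := 2)).continuous_sInf
    (f := fun φ c => opNorm (1 - frameOp φ c)) hcont).continuousOn.congr fun φ hφ => ?_
  refine sInf_opNorm_one_sub_frameOp_eq_Icc φ fun i => ?_
  simpa [dotProduct, sq] using hφ i
end

section
/- Let Φ = (φ_1, …, φ_M) be a finite family of vectors in ℝ^N, and let c and d be two minimal optimal scalings for the Frobenius-norm scaling problem. If c ≠ d, then the supports {i : c_i > 0} and {i : d_i > 0} are different. -/
/-- The Frobenius norm of a square real matrix. -/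
noncomputable def frobNorm {N : ℕ} (A : Matrix (Fin N) (Fin N) ℝ) : ℝ :=
  Real.sqrt (∑ i, ∑ j, (A i j) ^ 2)

lemma frameOp_add {N M : ℕ} (φ : Fin M → (Fin N → ℝ)) (a b : Fin M → ℝ) :
    frameOp φ (a + b) = frameOp φ a + frameOp φ b := by
  unfold frameOp
  rw [← Finset.sum_add_distrib]
  refine Finset.sum_congr rfl fun i _ => ?_
  simp [add_smul]

lemma frameOp_smul {N M : ℕ} (φ : Fin M → (Fin N → ℝ)) (t : ℝ) (a : Fin M → ℝ) :
    frameOp φ (t • a) = t • frameOp φ a := by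
  unfold frameOp
  rw [Finset.smul_sum]
  refine Finset.sum_congr rfl fun i _ => ?_
  simp [smul_smul]

noncomputable def fsq {N : ℕ} (A : Matrix (Fin N) (Fin N) ℝ) : ℝ := ∑ i, ∑ j, (A i j) ^ 2

lemma fsq_nonneg {N : ℕ} (A : Matrix (Fin N) (Fin N) ℝ) : 0 ≤ fsq A :=
  Finset.sum_nonneg fun i _ => Finset.sum_nonneg fun j _ => sq_nonneg _

lemma par {N : ℕ} (A B : Matrix (Fin N) (Fin N) ℝ) :
    fsq (A + B) + fsq (A - B) = 2 * fsq A + 2 * fsq B := by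
  unfold fsq
  rw [← Finset.sum_add_distrib, Finset.mul_sum, Finset.mul_sum, ← Finset.sum_add_distrib]
  refine Finset.sum_congr rfl fun i _ => ?_
  rw [← Finset.sum_add_distrib, Finset.mul_sum, Finset.mul_sum, ← Finset.sum_add_distrib]
  refine Finset.sum_congr rfl fun j _ => ?_
  simp [Matrix.add_apply, Matrix.sub_apply]; ring

lemma fsq_smul {N : ℕ} (t : ℝ) (A : Matrix (Fin N) (Fin N) ℝ) :
    fsq (t • A) = t ^ 2 * fsq A := by
  unfold fsq
  rw [Finset.mul_sum]
  refine Finset.sum_congr rfl fun i _ => ?_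
  rw [Finset.mul_sum]
  refine Finset.sum_congr rfl fun j _ => ?_
  simp [Matrix.smul_apply, mul_pow, smul_eq_mul]

lemma fsq_eq_zero {N : ℕ} {A : Matrix (Fin N) (Fin N) ℝ} (h : fsq A = 0) : A = 0 := by
  ext i j
  have h1 := (Finset.sum_eq_zero_iff_of_nonneg (fun i _ => Finset.sum_nonneg fun j _ => sq_nonneg (A i j))).mp h i (Finset.mem_univ i)
  have h2 := (Finset.sum_eq_zero_iff_of_nonneg (fun j _ => sq_nonneg (A i j))).mp h1 j (Finset.mem_univ j)
  simpa using pow_eq_zero_iff (n := 2) (by norm_num) |>.mp h2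

/-- The set of optimal scalings for the Frobenius-norm scaling problem: nonnegative
scalings minimizing `‖I - S(c)‖_F` among all nonnegative scalings. -/
def OptScalings {N M : ℕ} (φ : Fin M → (Fin N → ℝ)) : Set (Fin M → ℝ) :=
  {c | (∀ i, 0 ≤ c i) ∧ ∀ d : Fin M → ℝ, (∀ i, 0 ≤ d i) →
    frobNorm (1 - frameOp φ c) ≤ frobNorm (1 - frameOp φ d)}

/-- An optimal scaling is minimal if no optimal scaling has support properly contained in
its support. -/
def IsMinimalOpt {N M : ℕ} (φ : Fin M → (Fin N → ℝ)) (c : Fin M → ℝ) : Prop :=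
  c ∈ OptScalings φ ∧ ¬∃ d ∈ OptScalings φ, {i | 0 < d i} ⊂ {i | 0 < c i}

lemma frobNorm_le_iff {N : ℕ} (A B : Matrix (Fin N) (Fin N) ℝ) :
    frobNorm A ≤ frobNorm B ↔ fsq A ≤ fsq B := by
  unfold frobNorm fsq
  exact Real.sqrt_le_sqrt_iff (fsq_nonneg B)

lemma frameOp_eq_of_opt {N M : ℕ} (φ : Fin M → (Fin N → ℝ)) (c d : Fin M → ℝ)
    (hc : c ∈ OptScalings φ) (hd : d ∈ OptScalings φ) : frameOp φ c = frameOp φ d := by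
  set A := 1 - frameOp φ c with hA
  set B := 1 - frameOp φ d with hB
  set mid : Fin M → ℝ := (1/2 : ℝ) • c + (1/2 : ℝ) • d with hmid
  have hmidnn : ∀ i, 0 ≤ mid i := fun i => by
    have := hc.1 i; have := hd.1 i
    simp only [hmid, Pi.add_apply, Pi.smul_apply, smul_eq_mul]
    nlinarith
  have hSmid : 1 - frameOp φ mid = (1/2 : ℝ) • (A + B) := by
    rw [hmid, frameOp_add, frameOp_smul, frameOp_smul, hA, hB]
    ext i j
    simp [Matrix.sub_apply, Matrix.smul_apply, Matrix.add_apply, smul_eq_mul]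
    ring
  have h1 : fsq A ≤ fsq (1 - frameOp φ mid) :=
    (frobNorm_le_iff _ _).mp (hc.2 mid hmidnn)
  have h2 : fsq B ≤ fsq (1 - frameOp φ mid) :=
    (frobNorm_le_iff _ _).mp (hd.2 mid hmidnn)
  rw [hSmid, fsq_smul] at h1 h2
  have hpar := par A B
  have hAB : fsq (A - B) ≤ 0 := by nlinarith [fsq_nonneg (A + B)]
  have : A - B = 0 := fsq_eq_zero (le_antisymm hAB (fsq_nonneg _))
  have : A = B := by rwa [sub_eq_zero] at this
  have := congrArg (fun X => (1 : Matrix (Fin N) (Fin N) ℝ) - X) (this)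
  simp only [hA, hB, sub_sub_cancel] at this
  exact this

lemma key {N M : ℕ} (φ : Fin M → (Fin N → ℝ)) (c : Fin M → ℝ) (hc : IsMinimalOpt φ c)
    (v : Fin M → ℝ) (hv0 : frameOp φ v = 0) (hsub : ∀ i, v i ≠ 0 → 0 < c i)
    (i0 : Fin M) (hneg : v i0 < 0) : False := by
  classical
  set A : Finset (Fin M) := Finset.univ.filter (fun i => v i < 0) with hAdef
  have hi0A : i0 ∈ A := by simp [hAdef, hneg]
  obtain ⟨i1, hi1A, hmin⟩ := A.exists_min_image (fun i => c i / (- v i)) ⟨i0, hi0A⟩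
  have hv1 : v i1 < 0 := by simpa [hAdef] using hi1A
  have hc1 : 0 < c i1 := hsub i1 (ne_of_lt hv1)
  set T : ℝ := c i1 / (- v i1) with hT
  have hTpos : 0 < T := div_pos hc1 (by linarith)
  set e : Fin M → ℝ := c + T • v with he
  have hee : ∀ i, e i = c i + T * v i := fun i => rfl
  have henn : ∀ i, 0 ≤ e i := by
    intro i
    rw [hee]
    rcases lt_or_ge (v i) 0 with h | h
    · have hiA : i ∈ A := by simp [hAdef, h]
      have h2 := (le_div_iff₀ (by linarith : (0:ℝ) < -v i)).mp (hmin i hiA)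
      rw [mul_neg] at h2
      linarith
    · nlinarith [hc.1.1 i]
  have hSe : frameOp φ e = frameOp φ c := by
    rw [he, frameOp_add, frameOp_smul, hv0, smul_zero, add_zero]
  have heopt : e ∈ OptScalings φ := by
    refine ⟨henn, fun d' hd' => ?_⟩
    rw [hSe]
    exact hc.1.2 d' hd'
  refine hc.2 ⟨e, heopt, ?_⟩
  constructor
  · intro i hi
    simp only [Set.mem_setOf_eq] at hi ⊢
    by_cases hv : v i = 0
    · rw [hee, hv, mul_zero, add_zero] at hi; exact hi
    · exact hsub i hv
  · intro hcon
    have hlt : 0 < e i1 := hcon (show i1 ∈ {i | 0 < c i} from hc1)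
    have h1 : T * (-v i1) = c i1 := by
      rw [hT]; exact div_mul_cancel₀ _ (by linarith : (-v i1) ≠ 0)
    rw [mul_neg] at h1
    rw [hee] at hlt
    linarith

/-- two different minimal optimal scalings (for the Frobenius norm) have
different supports. -/
theorem stmt_18 (N M : ℕ) (φ : Fin M → (Fin N → ℝ))
    (c d : Fin M → ℝ) (hc : IsMinimalOpt φ c) (hd : IsMinimalOpt φ d) (hne : c ≠ d) :
    {i | 0 < c i} ≠ {i | 0 < d i} := by
  intro hsupp
  have hS : frameOp φ c = frameOp φ d := frameOp_eq_of_opt φ c d hc.1 hd.1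
  have hg0 : frameOp φ (d - c) = 0 := by
    have : d - c = d + (-1 : ℝ) • c := by ext i; simp; ring
    rw [this, frameOp_add, frameOp_smul, hS, neg_one_smul, add_neg_cancel]
  have hsub : ∀ i, (d - c) i ≠ 0 → 0 < c i := by
    intro i hi
    by_contra h
    have hci : c i = 0 := le_antisymm (not_lt.mp h) (hc.1.1 i)
    have : i ∉ {i | 0 < c i} := by simp [hci]
    rw [hsupp] at this
    have hdi : d i = 0 := le_antisymm (not_lt.mp this) (hd.1.1 i)
    apply hi; simp [Pi.sub_apply, hci, hdi]
  obtain ⟨i0, hi0⟩ : ∃ i, (d - c) i ≠ 0 := by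
    by_contra h
    push_neg at h
    apply hne
    ext i
    have := h i
    simp only [Pi.sub_apply, sub_eq_zero] at this
    exact this.symm
  rcases lt_or_gt_of_ne hi0 with h | h
  · exact key φ c hc (d - c) hg0 hsub i0 h
  · refine key φ c hc (-(d - c)) ?_ ?_ i0 (by simpa using h)
    · have : -(d - c) = (-1 : ℝ) • (d - c) := by ext i; simp
      rw [this, frameOp_smul, hg0, smul_zero]
    · intro i hi
      apply hsub i
      intro h0
      apply hi
      simp [Pi.neg_apply, h0]
end
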